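/- Let d ≥ 3 be an integer and define the polynomial f(x) = (x − d)·(x − √(d−1))²·(x + d + 2√(d−1)). Then for every finite simple graph G on n ≥ 1 vertices with maximum degree at most d, with adjacency-matrix eigenvalues λ_1, …, λ_n and average energy ε(G), one has (1/n)·∑_{i=1}^n f(|λ_i|) ≥ 2√(d−1)·(d + √(d−1))²·( ε(G) − √(d−1) − 1/(d + √(d−1)) ). -/

import Mathlib

/-!
With `s = √(d-1)`, `f |x| = x⁴ - ((d+s)² + 2s²)x² + 2s(d+s)²|x| - s²d(d+2s)`, so the `|x|` term
reproduces the average energy on the right exactly and the claim reduces to a bound on the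
spectral moments `tr A² = ∑ deg v` and `tr A⁴ = ∑_{v,w} ((A²)_{vw})²`. The entries of `A²` are
natural numbers, with diagonal `deg v` and total sum `∑ deg²`, so `tr A⁴ ≥ 2 ∑ deg² - ∑ deg`.
After Cauchy–Schwarz what remains is a quadratic in the average degree `a ≤ d` that vanishes at
`a = d` and whose other root exceeds `d`.
-/

open Polynomial Matrix Finset

theorem Polynomial.roots_finset_prod_X_sub_C {R ι : Type*} [CommRing R] [IsDomain R]
    (s : Finset ι) (f : ι → R) : (∏ i ∈ s, (X - C (f i))).roots = s.val.map f := by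
  simpa [Multiset.map_map] using roots_multiset_prod_X_sub_C (s.val.map f)

theorem Polynomial.sum_comp_eq_of_prod_X_sub_C_eq {R ι κ M : Type*} [CommRing R] [IsDomain R]
    [Fintype ι] [Fintype κ] [AddCommMonoid M] {μ : ι → R} {ν : κ → R}
    (h : ∏ i, (X - C (μ i)) = ∏ j, (X - C (ν j))) (g : R → M) :
    ∑ i, g (μ i) = ∑ j, g (ν j) := by
  have hμν : univ.val.map μ = univ.val.map ν := by
    simpa only [roots_finset_prod_X_sub_C] using congrArg roots h
  simpa [Multiset.map_map] using congrArg (fun m => (m.map g).sum) hμν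

namespace Matrix.IsHermitian

variable {𝕜 n : Type*} [RCLike 𝕜] [Fintype n] [DecidableEq n] {A : Matrix n n 𝕜}

theorem trace_pow_eq_sum_eigenvalues_pow (hA : A.IsHermitian) (k : ℕ) :
    (A ^ k).trace = ∑ i, (hA.eigenvalues i : 𝕜) ^ k := by
  conv_lhs => rw [hA.spectral_theorem, ← map_pow, Unitary.conjStarAlgAut_apply, trace_mul_cycle,
    Unitary.coe_star_mul_self, one_mul, diagonal_pow, trace_diagonal]
  simp

theorem sum_pow_eq_trace_pow (hA : A.IsHermitian) {μ : n → 𝕜}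
    (hμ : A.charpoly = ∏ i, (X - C (μ i))) (k : ℕ) : ∑ i, μ i ^ k = (A ^ k).trace := by
  rw [hA.trace_pow_eq_sum_eigenvalues_pow,
    sum_comp_eq_of_prod_X_sub_C_eq (hμ.symm.trans hA.charpoly_eq) (· ^ k)]

end Matrix.IsHermitian

namespace SimpleGraph

variable {V α : Type*} [Fintype V] (G : SimpleGraph V) [DecidableRel G.Adj]

theorem sum_adjMatrix_apply [NonAssocSemiring α] (v : V) :
    ∑ w, G.adjMatrix α v w = G.degree v := by
  simp [adjMatrix_apply, sum_boole, degree, neighborFinset_eq_filter]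

variable [DecidableEq V]

theorem trace_adjMatrix_sq [Semiring α] :
    ((G.adjMatrix α) ^ 2).trace = ∑ v, (G.degree v : α) := by
  simp only [trace, diag_apply, sq, adjMatrix_mul_self_apply_self]

theorem sum_adjMatrix_sq_apply [CommSemiring α] :
    ∑ v, ∑ w, (G.adjMatrix α ^ 2) v w = ∑ u, (G.degree u : α) ^ 2 := by
  calc ∑ v, ∑ w, (G.adjMatrix α ^ 2) v w
      = ∑ u, ∑ v, ∑ w, G.adjMatrix α u v * G.adjMatrix α u w := by
        simp_rw [sq, mul_apply]
        rw [sum_congr rfl fun _ _ => sum_comm, sum_comm]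
        refine sum_congr rfl fun u _ => sum_congr rfl fun v _ => ?_
        simp only [G.isSymm_adjMatrix.apply u v]
    _ = ∑ u, (G.degree u : α) ^ 2 := by simp only [← sum_mul_sum, sum_adjMatrix_apply, sq]

theorem trace_adjMatrix_pow_four [CommSemiring α] :
    ((G.adjMatrix α) ^ 4).trace = ∑ v, ∑ w, ((G.adjMatrix α ^ 2) v w) ^ 2 := by
  rw [show 4 = 2 + 2 from rfl, pow_add, trace]
  simp_rw [diag_apply, mul_apply, (G.isSymm_adjMatrix.pow 2).apply, sq]

section Ordered

variable [CommRing α] [LinearOrder α] [IsStrictOrderedRing α]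

theorem adjMatrix_sq_apply_le_sq (v w : V) :
    (G.adjMatrix α ^ 2) v w ≤ ((G.adjMatrix α ^ 2) v w) ^ 2 := by
  rw [adjMatrix_pow_apply_eq_card_walk]
  exact_mod_cast Nat.le_self_pow two_ne_zero _

theorem two_mul_sum_degree_sq_sub_sum_degree_le_trace_adjMatrix_pow_four :
    2 * ∑ v, (G.degree v : α) ^ 2 - ∑ v, (G.degree v : α) ≤ ((G.adjMatrix α) ^ 4).trace := by
  have hsum := G.sum_adjMatrix_sq_apply (α := α)
  have hle := G.adjMatrix_sq_apply_le_sq (α := α)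
  have htrace := G.trace_adjMatrix_pow_four (α := α)
  have hdiag (v : V) : (G.adjMatrix α ^ 2) v v = G.degree v := by
    simp only [sq, adjMatrix_mul_self_apply_self]
  set c := G.adjMatrix α ^ 2
  calc 2 * ∑ v, (G.degree v : α) ^ 2 - ∑ v, (G.degree v : α)
      = ∑ v, ∑ w, c v w + ∑ v, (c v v ^ 2 - c v v) := by
        simp only [hsum, hdiag, sum_sub_distrib]; ring
    _ ≤ ∑ v, ∑ w, c v w + ∑ v, ∑ w, (c v w ^ 2 - c v w) := by
        gcongr with v
        exact single_le_sum (fun w _ => sub_nonneg.mpr (hle v w)) (mem_univ v)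
    _ = ((G.adjMatrix α) ^ 4).trace := by
        simp only [htrace, sum_sub_distrib]; ring

end Ordered

end SimpleGraph

theorem sum_quartic_abs_eq {ι : Type*} [Fintype ι] (d s : ℝ) (μ : ι → ℝ) :
    ∑ i, (|μ i| - d) * (|μ i| - s) ^ 2 * (|μ i| + d + 2 * s)
      = ∑ i, μ i ^ 4 - ((d + s) ^ 2 + 2 * s ^ 2) * ∑ i, μ i ^ 2 + 2 * s * (d + s) ^ 2 * ∑ i, |μ i|
        - Fintype.card ι * (s ^ 2 * d * (d + 2 * s)) := by
  have hpoint (x : ℝ) : (|x| - d) * (|x| - s) ^ 2 * (|x| + d + 2 * s)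
      = x ^ 4 - ((d + s) ^ 2 + 2 * s ^ 2) * x ^ 2 + 2 * s * (d + s) ^ 2 * |x|
        - s ^ 2 * d * (d + 2 * s) := by
    linear_combination (|x| ^ 2 + x ^ 2 - ((d + s) ^ 2 + 2 * s ^ 2)) * sq_abs x
  simp only [hpoint, sum_sub_distrib, sum_add_distrib, ← mul_sum, sum_const, card_univ,
    nsmul_eq_mul]
  ring

/-- With `m` vertices, `D₁ = ∑ deg` and `D₂ = ∑ deg²`. -/
theorem degree_moment_bound {d s m D₁ D₂ : ℝ} (hs : s ^ 2 = d - 1) (hs0 : 0 ≤ s) (hd : 2 ≤ d)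
    (hm : 0 < m) (hD₁ : D₁ ≤ m * d) (hCS : D₁ ^ 2 ≤ m * D₂) :
    m * (s ^ 2 * d * (d + 2 * s) - 2 * s * (d + s) * (s * (d + s) + 1))
      ≤ 2 * D₂ - ((d + s) ^ 2 + 2 * s ^ 2 + 1) * D₁ := by
  -- `(d² + d - 2)/2 + sd` is the second root, besides `d`, of the quadratic in `D₁ / m`.
  have hr : d ≤ (d ^ 2 + d - 2) / 2 + s * d := by
    nlinarith [mul_nonneg (by linarith : (0 : ℝ) ≤ d - 2) (by linarith : (0 : ℝ) ≤ d + 1),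
      mul_nonneg hs0 (by linarith : (0 : ℝ) ≤ d)]
  have hroots : 0 ≤ 2 * (m * d - D₁) * (m * ((d ^ 2 + d - 2) / 2 + s * d) - D₁) := by
    have := mul_le_mul_of_nonneg_left hr hm.le
    apply mul_nonneg <;> linarith
  have hfactor : m * (m * (s ^ 2 * d * (d + 2 * s) - 2 * s * (d + s) * (s * (d + s) + 1)))
      = 2 * D₁ ^ 2 - ((d + s) ^ 2 + 2 * s ^ 2 + 1) * m * D₁
        - 2 * (m * d - D₁) * (m * ((d ^ 2 + d - 2) / 2 + s * d) - D₁) := by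
    linear_combination (m ^ 2 * (-d ^ 2 - 2 * s * d - 2 * s ^ 2 - 2 * d) + 3 * m * D₁) * hs
  refine le_of_mul_le_mul_left ?_ hm
  linarith

/-- Let `d ≥ 3` be an integer and let
`f x = (x − d)·(x − √(d−1))²·(x + d + 2√(d−1))`.  Then for every finite simple graph `G` on
`n ≥ 1` vertices with maximum degree at most `d`, with adjacency-matrix eigenvalues
`μ 1, …, μ n` (with multiplicity) and average energy `ε = (1/n)·∑ i, |μ i|`, one has
`(1/n)·∑ i, f |μ i| ≥ 2√(d−1)·(d + √(d−1))²·(ε − √(d−1) − 1/(d + √(d−1)))`. -/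
theorem polynomial_average_energy_bound
    (d n : ℕ) (hd : 3 ≤ d) (hn : 1 ≤ n)
    (G : SimpleGraph (Fin n)) [DecidableRel G.Adj]
    (hdeg : ∀ v : Fin n, G.degree v ≤ d)
    (f : ℝ → ℝ)
    (hf : ∀ x : ℝ, f x = (x - (d : ℝ)) * (x - Real.sqrt ((d : ℝ) - 1)) ^ 2
      * (x + (d : ℝ) + 2 * Real.sqrt ((d : ℝ) - 1)))
    (μ : Fin n → ℝ)
    (hchar : (G.adjMatrix ℝ).charpoly
      = ∏ i : Fin n, (Polynomial.X - Polynomial.C (μ i))) :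
    2 * Real.sqrt ((d : ℝ) - 1) * ((d : ℝ) + Real.sqrt ((d : ℝ) - 1)) ^ 2
        * ((1 / (n : ℝ)) * (∑ i : Fin n, |μ i|)
            - Real.sqrt ((d : ℝ) - 1) - 1 / ((d : ℝ) + Real.sqrt ((d : ℝ) - 1)))
      ≤ (1 / (n : ℝ)) * ∑ i : Fin n, f |μ i| := by
  have hd' : (3 : ℝ) ≤ d := by exact_mod_cast hd
  have hn' : (0 : ℝ) < n := by exact_mod_cast hn
  set s := Real.sqrt ((d : ℝ) - 1)
  have hs : s ^ 2 = d - 1 := Real.sq_sqrt (by linarith)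
  have hs0 : 0 ≤ s := Real.sqrt_nonneg _
  have hA : (G.adjMatrix ℝ).IsHermitian := G.isSymm_adjMatrix
  have hμ2 : ∑ i, μ i ^ 2 = ∑ v, (G.degree v : ℝ) := by
    rw [hA.sum_pow_eq_trace_pow hchar, G.trace_adjMatrix_sq]
  have hμ4 : 2 * ∑ v, (G.degree v : ℝ) ^ 2 - ∑ v, (G.degree v : ℝ) ≤ ∑ i, μ i ^ 4 := by
    rw [hA.sum_pow_eq_trace_pow hchar]
    exact G.two_mul_sum_degree_sq_sub_sum_degree_le_trace_adjMatrix_pow_four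
  have hCS : (∑ v, (G.degree v : ℝ)) ^ 2 ≤ n * ∑ v, (G.degree v : ℝ) ^ 2 := by
    simpa using sq_sum_le_card_mul_sum_sq (s := univ) (f := fun v => (G.degree v : ℝ))
  have hD₁ : ∑ v, (G.degree v : ℝ) ≤ n * d := by
    simpa using sum_le_sum fun v (_ : v ∈ univ) => (Nat.cast_le (α := ℝ)).mpr (hdeg v)
  have hmoment := degree_moment_bound hs hs0 (by linarith) hn' hD₁ hCS
  have hinv : (n : ℝ) * (1 / n) = 1 := mul_one_div_cancel hn'.ne'
  have hds : 2 * s * (d + s) ^ 2 * (1 / (d + s)) = 2 * s * (d + s) := by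
    field_simp
  refine le_of_mul_le_mul_left ?_ hn'
  rw [← mul_assoc (n : ℝ) (1 / n), hinv, one_mul]
  simp only [hf, sum_quartic_abs_eq, Fintype.card_fin, hμ2]
  linear_combination hmoment + hμ4 + (2 * s * (d + s) ^ 2 * ∑ i, |μ i|) * hinv - n * hds
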